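/- Let α be a real number with 0 < α < 1/3, let n ≥ 1 be an integer, and suppose j = αn is an even positive integer. Then for every real number x with |x| ≤ 2·√(α(1−α))·n, the value of the polynomial q_j at x satisfies |q_j(x)| ≤ ((2·√(α(1−α))·n)^j / j!) · ((1+√2)^{j+1} − (1−√2)^{j+1}) / (2^{j+1}·√2). -/
import Mathlib

set_option maxHeartbeats 1000000 in

/-- for `j = αn` even with `0 < α < 1/3`, on the interval
`|x| ≤ 2√(α(1-α))·n` one has the explicit bound
`|q_j(x)| ≤ ((2√(α(1-α))n)^j / j!) · ((1+√2)^{j+1} - (1-√2)^{j+1})/(2^{j+1}√2)`. -/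
theorem abs_q_le_of_linear_j (α : ℝ) (hα0 : 0 < α) (hα1 : α < 1 / 3)
    (n : ℕ) (hn : 1 ≤ n) (j : ℕ) (hje : Even j) (hjpos : 0 < j)
    (hjα : (j : ℝ) = α * (n : ℝ))
    (q : ℕ → Polynomial ℚ)
    (hq0 : q 0 = 1) (hq1 : q 1 = Polynomial.X)
    (hrec : ∀ i : ℕ, 1 ≤ i → i ≤ n - 1 →
      Polynomial.X * q i =
        Polynomial.C ((i : ℚ) + 1) * q (i + 1) +
        Polynomial.C ((n : ℚ) - (i : ℚ) + 1) * q (i - 1)) :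
    ∀ x : ℝ, |x| ≤ 2 * Real.sqrt (α * (1 - α)) * (n : ℝ) →
      |Polynomial.aeval x (q j)| ≤
        (2 * Real.sqrt (α * (1 - α)) * (n : ℝ)) ^ j / (j.factorial : ℝ) *
          (((1 + Real.sqrt 2) ^ (j + 1) - (1 - Real.sqrt 2) ^ (j + 1)) /
            (2 ^ (j + 1) * Real.sqrt 2)) := by
  intro x hx
  set s : ℝ := Real.sqrt 2 with hs_def
  have hs2 : s ^ 2 = 2 := Real.sq_sqrt (by norm_num)
  have hspos : 0 < s := Real.sqrt_pos.mpr (by norm_num)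
  set M : ℝ := 2 * Real.sqrt (α * (1 - α)) * (n : ℝ) with hM_def
  have hn1 : (1 : ℝ) ≤ (n : ℝ) := by exact_mod_cast hn
  have hα1' : α < 1 := by linarith
  have hMpos : 0 < M := by
    have : 0 < Real.sqrt (α * (1 - α)) := Real.sqrt_pos.mpr (by nlinarith)
    positivity
  have hM2 : M ^ 2 = 4 * (α * (1 - α)) * (n : ℝ) ^ 2 := by
    have h1 : Real.sqrt (α * (1 - α)) ^ 2 = α * (1 - α) :=
      Real.sq_sqrt (by nlinarith)
    rw [hM_def, mul_pow, mul_pow, h1]; ring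
  -- j < n
  have hjn : (j : ℝ) < (n : ℝ) := by nlinarith
  have hjnn : j < n := by exact_mod_cast hjn
  -- the sequence b
  set b : ℕ → ℝ := fun k => ((1 + s) ^ k - (1 - s) ^ k) / (2 ^ k * s) with hb_def
  have hb0 : b 0 = 0 := by simp [hb_def]
  have hb1 : b 1 = 1 := by
    simp only [hb_def, pow_one]
    field_simp
    ring
  have hbrec : ∀ k, b (k + 2) = b (k + 1) + b k / 4 := by
    intro k
    have e1 : (1 + s) ^ (k + 2) = (3 + 2 * s) * (1 + s) ^ k := by
      have h : (1 + s) ^ 2 = 3 + 2 * s := by nlinarith [hs2]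
      rw [pow_add, h]; ring
    have e2 : (1 - s) ^ (k + 2) = (3 - 2 * s) * (1 - s) ^ k := by
      have h : (1 - s) ^ 2 = 3 - 2 * s := by nlinarith [hs2]
      rw [pow_add, h]; ring
    have e3 : (1 + s) ^ (k + 1) = (1 + s) * (1 + s) ^ k := by ring
    have e4 : (1 - s) ^ (k + 1) = (1 - s) * (1 - s) ^ k := by ring
    simp only [hb_def]
    rw [e1, e2, e3, e4]
    have h2k : (2 : ℝ) ^ k ≠ 0 := by positivity
    field_simp
    ring
  have hbnn : ∀ k, 0 ≤ b k ∧ 0 ≤ b (k + 1) := by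
    intro k
    induction k with
    | zero => constructor <;> simp [hb0, hb1]
    | succ m ih =>
      refine ⟨ih.2, ?_⟩
      rw [hbrec]
      linarith [ih.1, ih.2]
  -- the key quadratic inequality
  have hkey : ∀ m : ℕ, m + 2 ≤ j →
      ((m : ℝ) + 1) * ((n : ℝ) - (m : ℝ)) ≤ M ^ 2 / 4 := by
    intro m hm
    rw [hM2]
    have hm' : ((m : ℝ) + 2) ≤ α * n := by
      rw [← hjα]; exact_mod_cast hm
    have hmn : (0 : ℝ) ≤ (m : ℝ) := Nat.cast_nonneg m
    nlinarith [mul_nonneg (show (0:ℝ) ≤ α * n - 1 - ((m:ℝ)+1) by linarith)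
        (show (0:ℝ) ≤ (n:ℝ) + 1 - ((m:ℝ)+1) - (α * n - 1) by nlinarith),
      mul_nonneg (show (0:ℝ) ≤ 1 - 3*α by linarith) (show (0:ℝ) ≤ (n:ℝ) by linarith)]
  -- main induction
  have main : ∀ m : ℕ,
      (m ≤ j → (m.factorial : ℝ) * |Polynomial.aeval x (q m)| ≤ M ^ m * b (m + 1)) ∧
      (m + 1 ≤ j → ((m+1).factorial : ℝ) * |Polynomial.aeval x (q (m+1))| ≤ M ^ (m+1) * b (m + 2)) := by
    intro m
    induction m with
    | zero =>
      constructor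
      · intro _
        rw [hq0]
        simp [hb1]
      · intro _
        rw [hq1]
        simp only [Polynomial.aeval_X]
        have : b 2 = 1 := by rw [(by norm_num : 2 = 0 + 2), hbrec, hb0, hb1]; norm_num
        simpa [this] using hx
    | succ m ih =>
      refine ⟨ih.2, ?_⟩
      intro hm2
      -- recursion at i = m+1
      have h1 : 1 ≤ m + 1 := Nat.le_add_left 1 m
      have h2 : m + 1 ≤ n - 1 := by omega
      have hr := hrec (m + 1) h1 h2
      have hr' := congrArg (fun p => Polynomial.aeval x p) hr
      simp only [map_add, map_mul, Polynomial.aeval_X, Polynomial.aeval_C,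
        Nat.add_sub_cancel, eq_ratCast] at hr'
      push_cast at hr'
      -- hr' : x * aeval x (q (m+1)) = ((m:ℝ)+1+1) * aeval x (q (m+2)) + ((n:ℝ)-((m:ℝ)+1)+1) * aeval x (q m)
      set P : ℕ → ℝ := fun i => Polynomial.aeval x (q i) with hP_def
      have heq : ((m : ℝ) + 2) * P (m + 2) = x * P (m + 1) - ((n : ℝ) - (m : ℝ)) * P m := by
        have : x * P (m+1) = ((m:ℝ)+1+1) * P (m+2) + ((n:ℝ)-((m:ℝ)+1)+1) * P m := hr'
        linarith [this]
      have hnm : (0 : ℝ) ≤ (n : ℝ) - (m : ℝ) := by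
        have : (m : ℝ) + 2 ≤ (j : ℝ) := by exact_mod_cast hm2
        linarith
      have habs : ((m : ℝ) + 2) * |P (m + 2)| ≤ |x| * |P (m + 1)| + ((n : ℝ) - (m : ℝ)) * |P m| := by
        have := abs_sub (x * P (m+1)) (((n : ℝ) - (m : ℝ)) * P m)
        calc ((m : ℝ) + 2) * |P (m + 2)| = |((m : ℝ) + 2) * P (m + 2)| := by
              rw [abs_mul, abs_of_nonneg (by positivity : (0:ℝ) ≤ (m:ℝ)+2)]
          _ = |x * P (m + 1) - ((n : ℝ) - (m : ℝ)) * P m| := by rw [heq]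
          _ ≤ |x * P (m+1)| + |((n : ℝ) - (m : ℝ)) * P m| := abs_sub _ _
          _ = |x| * |P (m+1)| + ((n : ℝ) - (m : ℝ)) * |P m| := by
              rw [abs_mul, abs_mul, abs_of_nonneg hnm]
      have hA := ih.1 (by omega)
      have hB := ih.2 (by omega)
      have hfac2 : (((m+2).factorial : ℝ)) = ((m:ℝ)+2) * ((m+1).factorial : ℝ) := by
        rw [Nat.factorial_succ]; push_cast; ring
      have hfac1 : (((m+1).factorial : ℝ)) = ((m:ℝ)+1) * ((m).factorial : ℝ) := by
        rw [Nat.factorial_succ]; push_cast; ring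
      have hPnn : (0:ℝ) ≤ |P (m+1)| := abs_nonneg _
      have hPnn0 : (0:ℝ) ≤ |P m| := abs_nonneg _
      have hkey' := hkey m hm2
      have hb1nn := (hbnn (m+1)).1
      have hb2nn := (hbnn (m+1)).2
      have hMm : (0:ℝ) ≤ M ^ m := by positivity
      calc (((m+1)+1).factorial : ℝ) * |P ((m+1)+1)|
          = ((m+1).factorial : ℝ) * (((m:ℝ)+2) * |P (m+2)|) := by rw [hfac2]; ring
        _ ≤ ((m+1).factorial : ℝ) * (|x| * |P (m+1)| + ((n:ℝ)-(m:ℝ)) * |P m|) := by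
            have hfp : (0:ℝ) ≤ ((m+1).factorial : ℝ) := by positivity
            exact mul_le_mul_of_nonneg_left habs hfp
        _ = |x| * (((m+1).factorial : ℝ) * |P (m+1)|)
              + ((n:ℝ)-(m:ℝ)) * ((m:ℝ)+1) * ((m.factorial : ℝ) * |P m|) := by
            rw [hfac1]; ring
        _ ≤ M * (M ^ (m+1) * b (m+2)) + (M^2/4) * (M ^ m * b (m+1)) := by
            have t1 : |x| * (((m+1).factorial : ℝ) * |P (m+1)|) ≤ M * (M ^ (m+1) * b (m+2)) := by
              have := mul_le_mul hx hB (by positivity) (le_of_lt hMpos)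
              exact this
            have t2 : ((n:ℝ)-(m:ℝ)) * ((m:ℝ)+1) * ((m.factorial : ℝ) * |P m|)
                ≤ (M^2/4) * (M ^ m * b (m+1)) := by
              have h1 : ((n:ℝ)-(m:ℝ)) * ((m:ℝ)+1) ≤ M^2/4 := by linarith [hkey']
              have h2 : (m.factorial : ℝ) * |P m| ≤ M ^ m * b (m+1) := hA
              have hc1 : (0:ℝ) ≤ ((n:ℝ)-(m:ℝ)) * ((m:ℝ)+1) := by positivity
              have hc2 : (0:ℝ) ≤ (m.factorial : ℝ) * |P m| := by positivity
              exact mul_le_mul h1 h2 hc2 (by positivity)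
            linarith
        _ = M ^ (m+2) * (b (m+2) + b (m+1) / 4) := by ring
        _ = M ^ ((m+1)+1) * b ((m+1)+2) := by rw [hbrec (m+1)]
  -- conclude
  have hmain := (main j).1 le_rfl
  have hfacpos : (0:ℝ) < (j.factorial : ℝ) := by positivity
  rw [div_mul_eq_mul_div, le_div_iff₀ hfacpos]
  have : M ^ j * (((1 + s) ^ (j + 1) - (1 - s) ^ (j + 1)) / (2 ^ (j + 1) * s)) = M ^ j * b (j+1) := by
    rw [hb_def]
  calc |Polynomial.aeval x (q j)| * (j.factorial : ℝ)
      = (j.factorial : ℝ) * |Polynomial.aeval x (q j)| := by ring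
    _ ≤ M ^ j * b (j+1) := hmain
    _ = M ^ j * (((1 + s) ^ (j + 1) - (1 - s) ^ (j + 1)) / (2 ^ (j + 1) * s)) := by rw [hb_def]
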